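/- arXiv:0906.2658 — 5 statements merged into one kernel-verified Lean document; each statement's English description precedes it below -/
import Mathlib

section
/- Let ⟨·⟩ : ℚ[t_1,t_2,...] → ℚ be the linear functional with ⟨1⟩ = 1 and ⟨t_{d_1}···t_{d_k}⟩ = (d_1+···+d_k)^{k-3} on monomials, extended x-linearly to ℚ[t][[x]]. Let Z_1(t,x) = Σ_{j>0} x^j t_j j^{j-1}/j!. Then ⟨exp(-Z_1)⟩ = 1 - x as a formal power series in x. -/
/-- The value of the bracket on a monomial `∏ t_j ^ (m j)`: it is `1` on the constant
monomial, and `(d₁+⋯+d_k)^(k-3)` on `t_{d₁}⋯t_{d_k}`, where `k` is the number of factors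
(with multiplicity) and the `d_i` are the variable indices. -/
noncomputable def brval (m : ℕ →₀ ℕ) : ℚ :=
  if m = 0 then 1
  else (((m.sum fun j e => j * e : ℕ) : ℚ)) ^ (((m.sum fun _ e => e : ℕ) : ℤ) - 3)

/-- The bracket `⟨·⟩ : ℚ[t₁,t₂,…] → ℚ`, the linear functional with `⟨1⟩ = 1` and
`⟨t_{d₁}⋯t_{d_k}⟩ = (d₁+⋯+d_k)^(k-3)`. -/
noncomputable def bracket (f : MvPolynomial ℕ ℚ) : ℚ :=
  ∑ m ∈ f.support, f.coeff m * brval m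

/-- `Z_i(t,x) = ∑_{j ≥ 1} x^j t_j j^{j-i} / j!` as a power series in `x` with
coefficients in `ℚ[t]`. -/
noncomputable def Zser (i : ℕ) : PowerSeries (MvPolynomial ℕ ℚ) :=
  PowerSeries.mk fun j =>
    if j = 0 then 0
    else MvPolynomial.C (((j : ℚ) ^ ((j : ℤ) - (i : ℤ))) / (Nat.factorial j : ℚ)) *
      MvPolynomial.X j

/-- `exp(-Z) = ∑_k (-Z)^k / k!`, computed coefficientwise (well defined for `Z` with
vanishing constant term, since then `(Z^k)`'s `n`-th coefficient vanishes for `k > n`). -/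
noncomputable def expNeg (Z : PowerSeries (MvPolynomial ℕ ℚ)) :
    PowerSeries (MvPolynomial ℕ ℚ) :=
  PowerSeries.mk fun n => ∑ k ∈ Finset.range (n + 1),
    MvPolynomial.C ((-1 : ℚ) ^ k / (Nat.factorial k : ℚ)) * PowerSeries.coeff n (Z ^ k)

/-- The `x`-linear extension of the bracket to `ℚ[t][[x]] → ℚ[[x]]`. -/
noncomputable def bracketSeries (F : PowerSeries (MvPolynomial ℕ ℚ)) : PowerSeries ℚ :=
  PowerSeries.mk fun n => bracket (PowerSeries.coeff n F)

/-!
Every coefficient of `x ^ n` in `exp (-Z₁)` is a polynomial of weight `n` in the `t_j`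
(`t_j` having weight `j`), and on such polynomials the bracket is `n ^ (-3)` times evaluation at
`t_j = n`. This evaluation turns `Z₁` into `n • T`, where `T = ∑ j ^ (j - 1) x ^ j / j!` is the
tree function. Abel's identity, proved with finite differences, gives `exp (x T) exp (y T) =
exp ((x + y) T)`, hence `[x ^ n] T ^ k = k n ^ (n - k - 1) / (n - k)!`, and the coefficient of
`x ^ n` collapses to `n ^ (n - 4) / n! * ∑ₖ (-1) ^ k (n choose k) k`, which vanishes for `n ≥ 2`.
-/

open Finset PowerSeries

theorem sum_range_neg_one_pow_mul_choose_mul_add_pow {R : Type*} [CommRing R] (x : R) {j N : ℕ}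
    (h : j < N) :
    ∑ k ∈ range (N + 1), (-1) ^ (N - k) * N.choose k * (x + k) ^ j = 0 := by
  have := congr_fun (fwdDiff_iter_pow_eq_zero_of_lt (R := R) h) x
  rw [fwdDiff_iter_eq_sum_shift] at this
  simpa [zsmul_eq_mul] using this

theorem sum_range_neg_one_pow_mul_choose_mul {R : Type*} [CommRing R] (n : ℕ) :
    ∑ k ∈ range (n + 1), (-1 : R) ^ k * n.choose k * k = if n = 1 then -1 else 0 := by
  rcases n with _ | _ | n
  · simp
  · simp [sum_range_succ]
  rw [if_neg (show n + 2 ≠ 1 by omega), ← mul_zero ((-1 : R) ^ (n + 2)),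
    ← sum_range_neg_one_pow_mul_choose_mul_add_pow (0 : R) (j := 1) (N := n + 2) (by omega),
    mul_sum]
  refine sum_congr rfl fun k hk => ?_
  have hsign : (-1 : R) ^ (n + 2) * (-1) ^ (n + 2 - k) = (-1) ^ k := by
    rw [← pow_add, show n + 2 + (n + 2 - k) = k + 2 * (n + 2 - k) by
      have := mem_range.mp hk; omega, pow_add, pow_mul]
    simp
  rw [← hsign]
  ring

section Abel

variable {K : Type*} [Field K]

theorem sum_range_choose_mul_abel_mul_neg_pow {x : K} (hx : ∀ k : ℕ, x + k ≠ 0) (N : ℕ) :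
    ∑ i ∈ range (N + 1), N.choose i * (x * (x + i) ^ ((i : ℤ) - 1)) * (-(x + i)) ^ (N - i)
      = if N = 0 then 1 else 0 := by
  rcases N with _ | M
  · simpa using mul_inv_cancel₀ (by simpa using hx 0)
  -- The sum is `x` times the `(M + 1)`-st finite difference of `i ↦ (x + i) ^ M`.
  rw [if_neg M.succ_ne_zero, ← mul_zero x,
    ← sum_range_neg_one_pow_mul_choose_mul_add_pow x M.lt_succ_self, mul_sum]
  refine sum_congr rfl fun i hi => ?_
  have hiM : i ≤ M + 1 := Nat.lt_succ_iff.mp (mem_range.mp hi)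
  have hpow : (x + i) ^ ((i : ℤ) - 1) * (x + i) ^ (M + 1 - i) = (x + i) ^ M := by
    rw [← zpow_natCast, ← zpow_add₀ (hx i), ← zpow_natCast]
    congr 1
    omega
  rw [neg_pow, ← hpow]
  ring

theorem abel_identity {x : K} (hx : ∀ k : ℕ, x + k ≠ 0) (y : K) (n : ℕ) :
    ∑ i ∈ range (n + 1), n.choose i * (x * (x + i) ^ ((i : ℤ) - 1)) * (y + (n - i : ℕ)) ^ (n - i)
      = (x + y + n) ^ n := by
  set s := x + y + n
  -- Expand `y + (n - i) = s - (x + i)` and collect the terms by the total exponent `N` of `x + i`.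
  have hexpand : ∀ i ∈ range (n + 1), (y + (n - i : ℕ)) ^ (n - i)
      = ∑ p ∈ range (n - i + 1), (-(x + i)) ^ p * s ^ (n - i - p) * (n - i).choose p := by
    intro i hi
    rw [← add_pow]
    congr 1
    push_cast [Nat.cast_sub (Nat.lt_succ_iff.mp (mem_range.mp hi))]
    ring
  calc _ = ∑ i ∈ range (n + 1), ∑ p ∈ range (n + 1 - i),
          n.choose i * (x * (x + i) ^ ((i : ℤ) - 1))
            * ((-(x + i)) ^ p * s ^ (n - i - p) * (n - i).choose p) := by
        refine sum_congr rfl fun i hi => ?_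
        rw [hexpand i hi, mul_sum, Nat.sub_add_comm (Nat.lt_succ_iff.mp (mem_range.mp hi))]
    _ = ∑ N ∈ range (n + 1), ∑ i ∈ range (N + 1), n.choose i * (x * (x + i) ^ ((i : ℤ) - 1))
          * ((-(x + i)) ^ (N - i) * s ^ (n - i - (N - i)) * (n - i).choose (N - i)) :=
        (sum_range_diag_flip (n + 1) _).symm
    _ = ∑ N ∈ range (n + 1), n.choose N * s ^ (n - N) * ∑ i ∈ range (N + 1),
          N.choose i * (x * (x + i) ^ ((i : ℤ) - 1)) * (-(x + i)) ^ (N - i) := by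
        refine sum_congr rfl fun N hN => ?_
        rw [mul_sum]
        refine sum_congr rfl fun i hi => ?_
        have hiN : i ≤ N := Nat.lt_succ_iff.mp (mem_range.mp hi)
        have hchoose : (n.choose i : K) * (n - i).choose (N - i) = n.choose N * N.choose i := by
          rw [← Nat.cast_mul, ← Nat.cast_mul, Nat.choose_mul hiN]
        rw [show n - i - (N - i) = n - N by omega]
        linear_combination
          (x * (x + i) ^ ((i : ℤ) - 1) * (-(x + i)) ^ (N - i) * s ^ (n - N)) * hchoose
    _ = s ^ n := by
        simp_rw [sum_range_choose_mul_abel_mul_neg_pow hx, mul_ite, mul_one, mul_zero]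
        simp

-- `abelSeries x = exp (x T)` and `abelPowSeries y = exp (y T) / (1 - T)` for the tree function
-- `T = treeSeries K`. With `zpow`, the constant coefficient of `abelSeries x` is `x * x⁻¹`,
-- which is `1` only for `x ≠ 0`.
noncomputable def abelSeries (x : K) : K⟦X⟧ :=
  mk fun n => x * (x + n) ^ ((n : ℤ) - 1) / n.factorial

noncomputable def abelPowSeries (y : K) : K⟦X⟧ :=
  mk fun n => (y + n) ^ n / n.factorial

variable (K) in
noncomputable def treeSeries : K⟦X⟧ :=
  mk fun n => (n : K) ^ ((n : ℤ) - 1) / n.factorial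

variable [CharZero K]

theorem abelSeries_mul_abelPowSeries {x : K} (hx : ∀ k : ℕ, x + k ≠ 0) (y : K) :
    abelSeries x * abelPowSeries y = abelPowSeries (x + y) := by
  ext n
  simp only [coeff_mul, Nat.sum_antidiagonal_eq_sum_range_succ_mk, abelSeries, abelPowSeries,
    coeff_mk]
  rw [← abel_identity hx, eq_div_iff (Nat.cast_ne_zero.mpr n.factorial_ne_zero),
    sum_mul]
  refine sum_congr rfl fun i hi => ?_
  rw [Nat.cast_choose K (Nat.lt_succ_iff.mp (mem_range.mp hi))]
  field_simp

theorem abelSeries_add {x y : K} (hx : ∀ k : ℕ, x + k ≠ 0) (hy : ∀ k : ℕ, y + k ≠ 0)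
    (hxy : ∀ k : ℕ, x + y + k ≠ 0) : abelSeries (x + y) = abelSeries x * abelSeries y := by
  have hne : abelPowSeries (0 : K) ≠ 0 := fun h => by
    simpa [abelPowSeries] using congr_arg (constantCoeff ·) h
  -- Both sides times `abelPowSeries 0` equal `abelPowSeries (x + y)`.
  refine mul_right_cancel₀ hne ?_
  rw [mul_assoc, abelSeries_mul_abelPowSeries hy, abelSeries_mul_abelPowSeries hx,
    abelSeries_mul_abelPowSeries hxy, add_zero, add_zero]

theorem treeSeries_eq_X_mul_abelSeries : treeSeries K = X * abelSeries 1 := by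
  ext (_ | m)
  · simp [treeSeries]
  · have hm : (m : K) + 1 ≠ 0 := by exact_mod_cast m.succ_ne_zero
    rw [coeff_succ_X_mul, treeSeries, abelSeries, coeff_mk, coeff_mk, Nat.factorial_succ]
    push_cast
    rw [add_sub_cancel_right, add_comm 1 (m : K), zpow_sub_one₀ hm]
    field_simp

theorem treeSeries_pow_succ (k : ℕ) :
    treeSeries K ^ (k + 1) = X ^ (k + 1) * abelSeries ((k : K) + 1) := by
  induction k with
  | zero => simp [treeSeries_eq_X_mul_abelSeries]
  | succ k ih =>
    have hne : ∀ a j : ℕ, (a : K) + 1 + j ≠ 0 := fun a j => by norm_cast; omega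
    rw [pow_succ, ih, treeSeries_eq_X_mul_abelSeries, Nat.cast_succ,
      abelSeries_add (hne k) (by simpa using hne 0) (by simpa [add_assoc] using hne (k + 1))]
    ring

theorem coeff_treeSeries_pow {k n : ℕ} (hk : k ≤ n) (hn : n ≠ 0) :
    coeff n (treeSeries K ^ k) = k * (n : K) ^ ((n : ℤ) - k - 1) / (n - k).factorial := by
  rcases k with _ | j
  · simp [hn]
  rw [treeSeries_pow_succ, coeff_X_pow_mul', if_pos hk, abelSeries, coeff_mk]
  have hbase : (j : K) + 1 + ((n - (j + 1) : ℕ) : K) = n := by push_cast [Nat.cast_sub hk]; ring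
  have hexp : ((n - (j + 1) : ℕ) : ℤ) - 1 = (n : ℤ) - (j + 1 : ℕ) - 1 := by
    push_cast [Nat.cast_sub hk]; ring
  rw [hbase, hexp]
  push_cast
  ring

end Abel

section WeightGraded

variable {σ R : Type*} [CommSemiring R]

def IsWeightGraded (w : σ → ℕ) (F : PowerSeries (MvPolynomial σ R)) : Prop :=
  ∀ n, (coeff n F).IsWeightedHomogeneous w n

namespace IsWeightGraded

variable {w : σ → ℕ} {F G : PowerSeries (MvPolynomial σ R)}

theorem one : IsWeightGraded w (1 : PowerSeries (MvPolynomial σ R)) := fun n => by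
  rw [coeff_one]
  split_ifs with h
  · exact h ▸ MvPolynomial.isWeightedHomogeneous_one R w
  · exact MvPolynomial.isWeightedHomogeneous_zero R w n

theorem mul (hF : IsWeightGraded w F) (hG : IsWeightGraded w G) : IsWeightGraded w (F * G) :=
  fun n => by
    rw [coeff_mul]
    exact MvPolynomial.IsWeightedHomogeneous.sum _ _ _ fun p hp =>
      (mem_antidiagonal.mp hp) ▸ (hF p.1).mul (hG p.2)

theorem pow (hF : IsWeightGraded w F) (k : ℕ) : IsWeightGraded w (F ^ k) := by
  induction k with
  | zero => exact pow_zero F ▸ one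
  | succ k ih => exact pow_succ F k ▸ ih.mul hF

end IsWeightGraded

end WeightGraded

theorem isWeightGraded_Zser (i : ℕ) : IsWeightGraded id (Zser i) := fun j => by
  rw [Zser, coeff_mk]
  split_ifs
  · exact MvPolynomial.isWeightedHomogeneous_zero ℚ id j
  · exact (MvPolynomial.isWeightedHomogeneous_X ℚ id j).C_mul _

theorem IsWeightGraded.expNeg {w : ℕ → ℕ} {Z : PowerSeries (MvPolynomial ℕ ℚ)}
    (hZ : IsWeightGraded w Z) : IsWeightGraded w (expNeg Z) := fun n => by
  rw [_root_.expNeg, coeff_mk]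
  exact MvPolynomial.IsWeightedHomogeneous.sum _ _ _ fun k _ => ((hZ.pow k) n).C_mul _

theorem bracket_eq_of_isWeightedHomogeneous {f : MvPolynomial ℕ ℚ} {n : ℕ} (hn : n ≠ 0)
    (hf : f.IsWeightedHomogeneous id n) :
    bracket f = (n : ℚ) ^ (-3 : ℤ) * MvPolynomial.eval (fun _ => (n : ℚ)) f := by
  rw [bracket, MvPolynomial.eval_eq, mul_sum]
  refine sum_congr rfl fun m hm => ?_
  have hweight : (m.sum fun j e => j * e) = n := by
    rw [← hf (MvPolynomial.mem_support_iff.mp hm), Finsupp.weight_apply]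
    simp [mul_comm]
  have hm0 : m ≠ 0 := by
    rintro rfl
    exact hn (by simpa using hweight.symm)
  rw [brval, if_neg hm0, hweight, prod_pow_eq_pow_sum, sub_eq_neg_add,
    zpow_add₀ (Nat.cast_ne_zero.mpr hn), zpow_natCast]
  simp only [Finsupp.sum]
  ring

theorem eval_coeff_expNeg (v : ℕ → ℚ) (Z : PowerSeries (MvPolynomial ℕ ℚ)) (n : ℕ) :
    MvPolynomial.eval v (coeff n (expNeg Z)) = ∑ k ∈ range (n + 1),
      (-1) ^ k / k.factorial * coeff n (map (MvPolynomial.eval v) Z ^ k) := by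
  simp [expNeg, ← map_pow, coeff_map]

theorem map_eval_const_Zser_one (c : ℚ) :
    map (MvPolynomial.eval fun _ => c) (Zser 1) = c • treeSeries ℚ := by
  ext j
  simp only [Zser, treeSeries, coeff_map, coeff_mk, coeff_smul, smul_eq_mul]
  split_ifs with hj
  · simp [hj]
  · simp [mul_comm]

theorem bracket_coeff_expNeg_Zser_one {n : ℕ} (hn : n ≠ 0) :
    bracket (coeff n (expNeg (Zser 1))) = (n : ℚ) ^ ((n : ℤ) - 4) / n.factorial *
      ∑ k ∈ range (n + 1), (-1 : ℚ) ^ k * n.choose k * k := by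
  rw [bracket_eq_of_isWeightedHomogeneous hn ((isWeightGraded_Zser 1).expNeg n),
    eval_coeff_expNeg, map_eval_const_Zser_one, mul_sum, mul_sum]
  refine sum_congr rfl fun k hk => ?_
  have hk : k ≤ n := Nat.lt_succ_iff.mp (mem_range.mp hk)
  have hn' : (n : ℚ) ≠ 0 := Nat.cast_ne_zero.mpr hn
  have hpow : (n : ℚ) ^ (-3 : ℤ) * (n : ℚ) ^ k * (n : ℚ) ^ ((n : ℤ) - k - 1)
      = (n : ℚ) ^ ((n : ℤ) - 4) := by
    rw [← zpow_natCast, ← zpow_add₀ hn', ← zpow_add₀ hn']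
    ring_nf
  rw [smul_pow, coeff_smul, coeff_treeSeries_pow hk hn, Nat.cast_choose ℚ hk, ← hpow,
    smul_eq_mul]
  field_simp

/-- Lemma 4 of the paper: `⟨exp(-Z₁)⟩ = 1 - x`. -/
theorem stmt_1 : bracketSeries (expNeg (Zser 1)) = 1 - PowerSeries.X := by
  ext n
  rw [bracketSeries, coeff_mk, map_sub, coeff_one, coeff_X]
  rcases eq_or_ne n 0 with rfl | hn
  · simp [expNeg, bracket, brval]
  · rw [bracket_coeff_expNeg_Zser_one hn, sum_range_neg_one_pow_mul_choose_mul, if_neg hn]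
    split_ifs with h1 <;> simp [h1]
end

section
/- If F_∅ = ⟨exp(-Z_1)⟩ and F_0 = ⟨exp(-Z_1)·Z_0⟩, then x·(d/dx) F_∅ = -F_0 as formal power series in x. -/
open PowerSeries

section

variable {R : Type*} [CommSemiring R]

lemma PowerSeries.coeff_pow_eq_zero_of_lt {φ : R⟦X⟧} (hφ : constantCoeff φ = 0) {n k : ℕ}
    (h : n < k) : coeff n (φ ^ k) = 0 :=
  coeff_of_lt_order n <| (Nat.cast_lt.mpr h).trans_le (le_order_pow_of_constantCoeff_eq_zero k hφ)

lemma PowerSeries.coeff_X_mul_derivative (f : R⟦X⟧) (n : ℕ) :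
    coeff n (X * d⁄dX R f) = n * coeff n f := by
  cases n with
  | zero => simp
  | succ n => rw [coeff_succ_X_mul, coeff_derivative, mul_comm, Nat.cast_succ]

end

lemma expNeg_eq_subst_exp {Z : PowerSeries (MvPolynomial ℕ ℚ)} (hZ : constantCoeff Z = 0) :
    expNeg Z = (exp (MvPolynomial ℕ ℚ)).subst (-Z) := by
  ext1 n
  rw [expNeg, coeff_mk, coeff_subst' (HasSubst.of_constantCoeff_zero' (by simp [hZ])),
    finsum_eq_sum_of_support_subset (s := Finset.range (n + 1))]
  · refine Finset.sum_congr rfl fun k _ => ?_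
    have h_neg_pow : (-Z) ^ k = C (MvPolynomial.C ((-1 : ℚ) ^ k)) * Z ^ k := by
      rw [neg_pow, map_pow, map_pow, map_neg, map_neg, map_one, map_one]
    rw [h_neg_pow, coeff_C_mul, coeff_exp, smul_eq_mul, MvPolynomial.algebraMap_eq, ← mul_assoc,
      ← map_mul, one_div_mul_eq_div]
  · refine Function.support_subset_iff'.mpr fun k hk => ?_
    rw [coeff_pow_eq_zero_of_lt (by simp [hZ]) (by simpa using hk), smul_zero]

lemma derivative_expNeg {Z : PowerSeries (MvPolynomial ℕ ℚ)} (hZ : constantCoeff Z = 0) :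
    d⁄dX _ (expNeg Z) = -(expNeg Z * d⁄dX _ Z) := by
  rw [expNeg_eq_subst_exp hZ, derivative_subst (HasSubst.of_constantCoeff_zero' (by simp [hZ])),
    derivative_exp, map_neg, mul_neg]

lemma constantCoeff_Zser (i : ℕ) : constantCoeff (Zser i) = 0 := by
  simp [← coeff_zero_eq_constantCoeff_apply, Zser]

lemma X_mul_derivative_Zser_succ (i : ℕ) : X * d⁄dX _ (Zser (i + 1)) = Zser i := by
  ext1 n
  rw [coeff_X_mul_derivative, Zser, Zser, coeff_mk, coeff_mk]
  split_ifs with hn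
  · rw [mul_zero]
  · have hn' : (n : ℚ) ≠ 0 := Nat.cast_ne_zero.mpr hn
    rw [← mul_assoc, ← map_natCast MvPolynomial.C, ← map_mul, mul_div_assoc', Nat.cast_succ,
      ← sub_sub, zpow_sub_one₀ hn', mul_comm _ (n : ℚ)⁻¹, mul_inv_cancel_left₀ hn']

noncomputable def bracketLinearMap : MvPolynomial ℕ ℚ →ₗ[ℚ] ℚ :=
  Finsupp.linearCombination ℚ brval ∘ₗ (AddMonoidAlgebra.coeffLinearEquiv ℚ).toLinearMap

lemma bracketLinearMap_apply (p : MvPolynomial ℕ ℚ) : bracketLinearMap p = bracket p := rfl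

lemma bracketSeries_neg (F : PowerSeries (MvPolynomial ℕ ℚ)) :
    bracketSeries (-F) = -bracketSeries F := by
  ext1 n
  simp only [bracketSeries, coeff_mk, map_neg, ← bracketLinearMap_apply]

lemma bracketSeries_X_mul_derivative (F : PowerSeries (MvPolynomial ℕ ℚ)) :
    bracketSeries (X * d⁄dX _ F) = X * d⁄dX ℚ (bracketSeries F) := by
  ext1 n
  simp only [coeff_X_mul_derivative, bracketSeries, coeff_mk, ← bracketLinearMap_apply,
    ← nsmul_eq_mul, map_nsmul]

/-- Lemma 5 of the paper: with `F_∅ = ⟨exp(-Z₁)⟩` and `F₀ = ⟨exp(-Z₁)·Z₀⟩`, one has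
`x·(d/dx) F_∅ = -F₀` as formal power series in `x`. -/
theorem stmt_4 :
    PowerSeries.X * (PowerSeries.derivative ℚ (bracketSeries (expNeg (Zser 1)))) =
      - bracketSeries (expNeg (Zser 1) * Zser 0) := by
  rw [← bracketSeries_X_mul_derivative, derivative_expNeg (constantCoeff_Zser 1), mul_neg,
    mul_left_comm, X_mul_derivative_Zser_succ, bracketSeries_neg]
end

section
/- Let V be a ℚ-vector space with basis indexed by partitions of d, and let T : V → V be the linear map sending the basis vector e_p, for a partition p = (p_1,...,p_ℓ) of d, to Σ_{σ ∈ S_ℓ} e_{σ(p)}, where σ(p) is the partition of d whose parts are the sums σ(p)_i = Σ_{j in cycle γ_i of σ} p_j over the cycles of σ. Then T is invertible. -/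
/-- The canonical representative (the least element) of the `σ`-orbit (cycle) of `j`. -/
def orbitRep {ℓ : ℕ} (σ : Equiv.Perm (Fin ℓ)) (j : Fin ℓ) : Fin ℓ :=
  (Finset.univ.filter fun i => σ.SameCycle j i).min'
    ⟨j, by simp [Equiv.Perm.SameCycle.refl]⟩

/-- The partition `σ(p)` of `d`: its parts are the sums of the parts of `p` over the
cycles (orbits, including fixed points) of the permutation `σ` of the index set of the
parts of `p`.  The orbits of `σ` are precisely the fibers of `orbitRep σ`. -/
noncomputable def permPartition {d : ℕ} (p : Nat.Partition d)
    (σ : Equiv.Perm (Fin p.parts.toList.length)) : Nat.Partition d where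
  parts :=
    (Finset.univ.image (orbitRep σ)).val.map fun j =>
      ∑ i ∈ Finset.univ.filter (fun i => orbitRep σ i = j), p.parts.toList.get i
  parts_pos := by
    intro x hx
    simp only [Multiset.mem_map, Finset.mem_val, Finset.mem_image] at hx
    obtain ⟨j, ⟨a, -, ha⟩, rfl⟩ := hx
    refine Finset.sum_pos (fun i _ => p.parts_pos ?_) ⟨a, by simpa using ha⟩
    exact Multiset.mem_toList.mp (p.parts.toList.get_mem _)
  parts_sum := by
    have h :
        ((Finset.univ.image (orbitRep σ)).val.map fun j =>
            ∑ i ∈ Finset.univ.filter (fun i => orbitRep σ i = j),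
              p.parts.toList.get i).sum =
          ∑ j ∈ Finset.univ.image (orbitRep σ),
            ∑ i ∈ Finset.univ.filter (fun i => orbitRep σ i = j),
              p.parts.toList.get i := rfl
    rw [h,
      Finset.sum_fiberwise_of_maps_to
        (fun i _ => Finset.mem_image_of_mem (orbitRep σ) (Finset.mem_univ i)),
      ]
    simpa using (Fin.sum_univ_getElem p.parts.toList).trans ((Multiset.sum_toList p.parts).trans p.parts_sum)

open scoped Classical in
/-- The matrix of the linear map `T` on the `ℚ`-vector space with basis indexed by the
partitions of `d`, sending the basis vector `e_p` to `∑_{σ ∈ S_{ℓ(p)}} e_{σ(p)}`: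
its `(p,q)` entry is the number of `σ` with `σ(p) = q`. -/
noncomputable def Tmat (d : ℕ) : Matrix (Nat.Partition d) (Nat.Partition d) ℚ :=
  fun p q =>
    ((Finset.univ.filter fun σ : Equiv.Perm (Fin p.parts.toList.length) =>
        permPartition p σ = q).card : ℚ)

/-! A permutation `σ ≠ 1` merges at least two indices into one cycle, so `σ(p)` has fewer parts
than `p`, while `1(p) = p`. Ordering partitions by decreasing length therefore makes the matrix
of `T` block triangular with identity diagonal blocks, so its determinant is `1`. -/

namespace Matrix

variable {m α R : Type*} [Fintype m] [DecidableEq m] [LinearOrder α] [CommRing R]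

theorem BlockTriangular.det_eq_one {M : Matrix m m R} {b : m → α} (hM : M.BlockTriangular b)
    (hdiag : ∀ i j, b i = b j → M i j = (1 : Matrix m m R) i j) : M.det = 1 := by
  rw [hM.det]
  refine Finset.prod_eq_one fun k _ => ?_
  suffices M.toSquareBlock b k = 1 by rw [this, det_one]
  ext ⟨i, hi⟩ ⟨j, hj⟩
  simp [toSquareBlock_def, hdiag i j (hi.trans hj.symm), one_apply]

end Matrix

section orbitRep

variable {ℓ : ℕ}

lemma orbitRep_eq_of_sameCycle {σ : Equiv.Perm (Fin ℓ)} {i j : Fin ℓ} (h : σ.SameCycle i j) :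
    orbitRep σ i = orbitRep σ j := by
  unfold orbitRep
  congr 1
  ext x
  simpa using ⟨h.symm.trans, h.trans⟩

@[simp]
lemma orbitRep_one : orbitRep (1 : Equiv.Perm (Fin ℓ)) = id := by
  funext j
  simp only [orbitRep, Equiv.Perm.sameCycle_one, Finset.filter_eq, Finset.mem_univ, if_true,
    Finset.min'_singleton, id]

lemma card_image_orbitRep_lt {σ : Equiv.Perm (Fin ℓ)} (hσ : σ ≠ 1) :
    (Finset.univ.image (orbitRep σ)).card < ℓ := by
  obtain ⟨j, hj⟩ : ∃ j, σ j ≠ j := by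
    by_contra! h
    exact hσ (Equiv.ext h)
  have hnotInj : ¬ Set.InjOn (orbitRep σ) (Finset.univ : Finset (Fin ℓ)) := fun hinj =>
    hj (hinj (by simp) (by simp) (orbitRep_eq_of_sameCycle ⟨1, by simp⟩).symm)
  have hle : (Finset.univ.image (orbitRep σ)).card ≤ (Finset.univ : Finset (Fin ℓ)).card :=
    Finset.card_image_le
  exact (hle.lt_of_ne fun heq => hnotInj (Finset.card_image_iff.1 heq)).trans_eq
    (Finset.card_fin ℓ)

end orbitRep

section permPartition

variable {d : ℕ} (p : Nat.Partition d)

@[simp]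
lemma permPartition_one : permPartition p 1 = p := by
  ext1
  simp only [permPartition, orbitRep_one, id, Finset.image_id, Finset.filter_eq', Finset.mem_univ,
    if_true, Finset.sum_singleton]
  rw [Fin.univ_val_map, List.ofFn_get, Multiset.coe_toList]

lemma card_parts_permPartition_lt {σ : Equiv.Perm (Fin p.parts.toList.length)} (hσ : σ ≠ 1) :
    (permPartition p σ).parts.card < p.parts.card := by
  have h := card_image_orbitRep_lt hσ
  simp only [permPartition, Multiset.card_map, Finset.card_val]
  exact h.trans_eq (Multiset.length_toList p.parts)

lemma Tmat_apply_of_card_le {p q : Nat.Partition d} (h : p.parts.card ≤ q.parts.card) :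
    Tmat d p q = (1 : Matrix (Nat.Partition d) (Nat.Partition d) ℚ) p q := by
  have hsub : (Finset.univ.filter fun σ => permPartition p σ = q) =
      ({1} : Finset _).filter fun σ => permPartition p σ = q := by
    ext σ
    simp only [Finset.mem_filter, Finset.mem_univ, true_and, Finset.mem_singleton, iff_and_self]
    rintro rfl
    by_contra hσ
    exact (card_parts_permPartition_lt p hσ).not_ge h
  rw [Tmat, hsub, Finset.filter_singleton, permPartition_one, Matrix.one_apply]
  split_ifs <;> simp

end permPartition

open scoped Classical in
/-- The linear map `T : V → V`, `e_p ↦ ∑_{σ ∈ S_ℓ} e_{σ(p)}`, is invertible. -/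
theorem stmt_6 (d : ℕ) : Function.Bijective (Matrix.toLin' (Tmat d)) := by
  have htri : (Tmat d).BlockTriangular fun p => OrderDual.toDual p.parts.card := fun p q h => by
    rw [Tmat_apply_of_card_le (OrderDual.toDual_lt_toDual.1 h).le, Matrix.one_apply_ne]
    rintro rfl
    exact lt_irrefl _ h
  have hunit : IsUnit (Tmat d) := by
    rw [Matrix.isUnit_iff_isUnit_det,
      htri.det_eq_one fun p q h => Tmat_apply_of_card_le (le_of_eq h)]
    exact isUnit_one
  exact ⟨Matrix.mulVec_injective_iff_isUnit.2 hunit, Matrix.mulVec_surjective_iff_isUnit.2 hunit⟩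
end

section
/- The matrix Y_0(d) indexed by P_0(d) (partitions of d of length ≥ 2, ordered so that longer partitions come first and, among partitions of equal length, lexicographically with larger parts first) is upper-triangular, where Y_0(d)[(1^d),(1^d)] = 1/d and otherwise Y_0(d)[p,q] = (1/|Aut(p)|)(1/|Aut(q̂)|) Σ_θ Π_{i=1}^{ℓ(q)} [ multinomial(q_i; p_{i[1]},...,p_{i[ℓ_i]}) · q_i^{ℓ_i - 2} · Π_{j=1}^{ℓ_i} p_{i[j]}^{p_{i[j]}-1} ], the sum over functions θ : {1,...,ℓ(p)} → {1,...,ℓ(q)} with θ^{-1}(i) = {i[1],...,i[ℓ_i]} satisfying q_i = Σ_j p_{i[j]}. -/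
/-- `|Aut(m)|` for a multiset of parts: the product over the distinct values of the
factorial of its multiplicity. -/
def autCard (m : Multiset ℕ) : ℕ :=
  ∏ x ∈ m.toFinset, Nat.factorial (m.count x)

/-- `p̂`: the multiset obtained by removing all parts equal to `1`. -/
def phat (m : Multiset ℕ) : Multiset ℕ := m.filter (fun x => x ≠ 1)

/-- `P₀(d)`: partitions of `d` of length at least 2. -/
abbrev Pzero (d : ℕ) := {p : Nat.Partition d // 2 ≤ p.parts.card}

/-- The matrix `X₀(d)`, indexed by partitions of `d` of length `≥ 2`:
`X₀(d)[(1^d), q] = (-1)^{ℓ(q)-1} d`, and for `p ≠ (1^d)`,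
`X₀(d)[p,q] = ∑_φ (-1)^{ℓ(q)-ℓ(p̂)} ∏_i q_{φ(i)}^{-p̂_i+2}`, summed over injections
`φ : {1,…,ℓ(p̂)} → {1,…,ℓ(q)}`. -/
noncomputable def Xmat (d : ℕ) : Matrix (Pzero d) (Pzero d) ℚ := fun p q =>
  let qL := q.1.parts.toList
  if p.1.parts = Multiset.replicate d 1 then (-1 : ℚ) ^ (qL.length - 1) * (d : ℚ)
  else
    let pL := (phat p.1.parts).toList
    ∑ φ : Fin pL.length ↪ Fin qL.length,
      (-1 : ℚ) ^ (qL.length - pL.length) *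
        ∏ i, (qL.get (φ i) : ℚ) ^ (2 - (pL.get i : ℤ))

/-- The parts of a partition listed in weakly decreasing order. -/
def descList (m : Multiset ℕ) : List ℕ := (m.sort (· ≤ ·)).reverse

/-- The total order on `P₀(d)` used in the paper: `p` comes (strictly) before `q` if `p`
is longer than `q`, or they have equal length and `p` is lexicographically larger (larger
parts first). -/
def ordBefore {d : ℕ} (p q : Nat.Partition d) : Prop :=
  q.parts.card < p.parts.card ∨
    (p.parts.card = q.parts.card ∧
      List.Lex (· < ·) (descList q.parts) (descList p.parts))

/-- The matrix `Y₀(d)`: `Y₀(d)[(1^d),(1^d)] = 1/d` and otherwise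
`Y₀(d)[p,q] = (1/|Aut(p)|)(1/|Aut(q̂)|) ∑_θ ∏_i binom(q_i; p's over θ⁻¹(i)) q_i^{ℓ_i-2}
∏_j p_{i[j]}^{p_{i[j]}-1}`, summed over `θ : {1,…,ℓ(p)} → {1,…,ℓ(q)}` such that the parts
of `p` indexed by `θ⁻¹(i)` sum to `q_i`. -/
noncomputable def Ymat (d : ℕ) : Matrix (Pzero d) (Pzero d) ℚ := fun p q =>
  if p.1.parts = Multiset.replicate d 1 ∧ q.1.parts = Multiset.replicate d 1 then
    1 / (d : ℚ)
  else
    let pL := p.1.parts.toList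
    let qL := q.1.parts.toList
    ((autCard p.1.parts : ℚ))⁻¹ * ((autCard (phat q.1.parts) : ℚ))⁻¹ *
      ∑ θ ∈ Finset.univ.filter
          (fun θ : Fin pL.length → Fin qL.length =>
            ∀ i, qL.get i = ∑ j ∈ Finset.univ.filter (fun j => θ j = i), pL.get j),
        ∏ i,
          ((Nat.multinomial (Finset.univ.filter (fun j => θ j = i))
                (fun j => pL.get j) : ℚ) *
            (qL.get i : ℚ) ^ ((((Finset.univ.filter (fun j => θ j = i)).card : ℤ)) - 2) *
            ∏ j ∈ Finset.univ.filter (fun j => θ j = i),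
              (pL.get j : ℚ) ^ (pL.get j - 1))

/-
The sum defining `Y₀(d)[p,q]` runs over maps `θ` exhibiting `p` as a refinement of `q`: since
the parts of `q` are positive, every fibre of `θ` is nonempty, so `θ` is surjective and
`ℓ(q) ≤ ℓ(p)`. If `ℓ(q) = ℓ(p)` then `θ` is a bijection matching each part of `q` with an
equal part of `p`, so `p = q`. Hence when `q` strictly precedes `p` there is no such `θ` and the
sum is empty.
-/

open Finset

section FiberSum

variable {α β : Type*} [Fintype α] [DecidableEq β] {θ : α → β} {a : α → ℕ} {b : β → ℕ}

theorem surjective_of_forall_eq_fiber_sum (hb : ∀ i, 0 < b i)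
    (hθ : ∀ i, b i = ∑ j ∈ univ.filter (θ · = i), a j) : Function.Surjective θ := by
  intro i
  by_contra! hi
  have hbi := hθ i
  rw [filter_false_of_mem fun j _ => hi j, sum_empty] at hbi
  exact (hb i).ne' hbi

theorem map_univ_val_eq_of_forall_eq_fiber_sum [Fintype β] (hθ_bij : Function.Bijective θ)
    (hθ : ∀ i, b i = ∑ j ∈ univ.filter (θ · = i), a j) :
    univ.val.map b = univ.val.map a := by
  have hfiber (j : α) : univ.filter (θ · = θ j) = {j} := by
    ext k
    simp [hθ_bij.injective.eq_iff]
  rw [← (Multiset.bijective_iff_map_univ_eq_univ θ).1 hθ_bij, Multiset.map_map]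
  exact Multiset.map_congr rfl fun j _ => by simp [hθ, hfiber]

end FiberSum

section ListRefinement

variable {l m : List ℕ} {θ : Fin l.length → Fin m.length}

theorem List.length_le_of_forall_get_eq_fiber_sum (hm : ∀ x ∈ m, 0 < x)
    (hθ : ∀ i, m.get i = ∑ j ∈ univ.filter (θ · = i), l.get j) : m.length ≤ l.length := by
  simpa using Fintype.card_le_of_surjective θ
    (surjective_of_forall_eq_fiber_sum (fun i => hm _ (m.get_mem i)) hθ)

theorem List.coe_eq_of_forall_get_eq_fiber_sum (hm : ∀ x ∈ m, 0 < x)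
    (hθ : ∀ i, m.get i = ∑ j ∈ univ.filter (θ · = i), l.get j) (hlen : l.length = m.length) :
    (m : Multiset ℕ) = l := by
  have hθ_bij : Function.Bijective θ :=
    (Fintype.bijective_iff_surjective_and_card θ).2
      ⟨surjective_of_forall_eq_fiber_sum (fun i => hm _ (m.get_mem i)) hθ, by simpa using hlen⟩
  have hmap := map_univ_val_eq_of_forall_eq_fiber_sum hθ_bij hθ
  rwa [Fin.univ_val_map, Fin.univ_val_map, List.ofFn_get, List.ofFn_get] at hmap

end ListRefinement

theorem ordBefore_irrefl {d : ℕ} (p : Nat.Partition d) : ¬ ordBefore p p := by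
  rintro (hcard | ⟨-, hlex⟩)
  · exact lt_irrefl _ hcard
  · exact irrefl _ hlex

theorem not_ordBefore_of_forall_get_eq_fiber_sum {d : ℕ} {p q : Nat.Partition d}
    {θ : Fin p.parts.toList.length → Fin q.parts.toList.length}
    (hθ : ∀ i, q.parts.toList.get i =
      ∑ j ∈ univ.filter (θ · = i), p.parts.toList.get j) :
    ¬ ordBefore q p := by
  have hpos : ∀ x ∈ q.parts.toList, 0 < x := fun x hx => q.parts_pos (Multiset.mem_toList.1 hx)
  have hlen := List.length_le_of_forall_get_eq_fiber_sum hpos hθ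
  simp only [Multiset.length_toList] at hlen
  rintro (hcard | ⟨hcard, hlex⟩)
  · exact hcard.not_ge hlen
  · have hparts := List.coe_eq_of_forall_get_eq_fiber_sum hpos hθ (by simp [hcard])
    simp only [Multiset.coe_toList] at hparts
    rw [hparts] at hlex
    exact irrefl _ hlex

theorem stmt_10_general (d : ℕ) (p q : Pzero d) (h : ordBefore q.1 p.1) :
    Ymat d p q = 0 := by
  have hpq : p.1 ≠ q.1 := fun hpq => ordBefore_irrefl _ (hpq ▸ h)
  have hdiag : ¬ (p.1.parts = Multiset.replicate d 1 ∧ q.1.parts = Multiset.replicate d 1) :=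
    fun ⟨hp, hq⟩ => hpq (Nat.Partition.ext (hp.trans hq.symm))
  dsimp only [Ymat]
  rw [if_neg hdiag]
  refine mul_eq_zero_of_right _ (sum_eq_zero fun θ hθ => ?_)
  exact (not_ordBefore_of_forall_get_eq_fiber_sum (mem_filter.1 hθ).2 h).elim

/-- `Y₀(d)` is upper-triangular for the paper's ordering on `P₀(d)`: the entry
`Y₀(d)[p,q]` vanishes whenever `q` strictly precedes `p`. -/
theorem stmt_10 (d : ℕ) (hd : 2 ≤ d) (p q : Pzero d) (h : ordBefore q.1 p.1) :
    Ymat d p q = 0 :=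
  stmt_10_general d p q h
end

section
/- Fix α_1 ≥ 0 and let k = 1 + α_1. Then Σ over all tuples (p_1; {p_2,...,p_ℓ}) with p_i > 0 and Σ p_i = k of [1/|Aut({p_2,...,p_ℓ})|] · p_1^{-α_1} · Π_{i=2}^ℓ (-p_i)^{-1} · Π_{i=1}^ℓ (p_i^{p_i}/p_i!) · k^{ℓ-3} equals (-1)^{α_1}/(k·k!). -/
/-!
For fixed `p₁`, the inner sum over partitions of `n = k - p₁` is the coefficient of `xⁿ` in
`exp (-k T(x))`, where `T(x) = ∑ j^(j-1) xʲ / j!` is the tree function, so it equals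
`-k (n - k)^(n-1) / n!`. We obtain this from the recurrence `n Sₙ = ∑ⱼ j fⱼ Sₙ₋ⱼ` satisfied by
such exponential partition sums, which the closed form satisfies by Abel's identity; Abel's
identity in turn reduces, after expanding in powers of `x + y + m`, to the vanishing of `s`-th
finite differences of polynomials of degree `< s`. Since `k = 1 + α₁`, the powers of `p₁` cancel
and the `p₁`-th outer term is `-(-1)^(α₁ + p₁) C(k, p₁) / (k·k!)`; the alternating binomial sum
then gives `(-1)^α₁ / (k·k!)`.
-/

open Finset Nat

lemma autCard_eq_prod_of_subset {m : Multiset ℕ} {s : Finset ℕ} (h : m.toFinset ⊆ s) :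
    autCard m = ∏ x ∈ s, (m.count x)! :=
  prod_subset h fun x _ hx => by
    rw [Multiset.count_eq_zero.mpr (by simpa using hx), factorial_zero]

lemma autCard_cons (a : ℕ) (m : Multiset ℕ) :
    autCard (a ::ₘ m) = autCard m * (m.count a + 1) := by
  classical
  have hsub : m.toFinset ⊆ insert a m.toFinset := subset_insert _ _
  have hfac : ∀ x, ((a ::ₘ m).count x)! = (m.count x)! * if x = a then m.count a + 1 else 1 := by
    intro x
    split_ifs with h
    · rw [h, Multiset.count_cons_self, factorial_succ, mul_comm]
    · rw [Multiset.count_cons_of_ne h, mul_one]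
  rw [autCard, Multiset.toFinset_cons, prod_congr rfl fun x _ => hfac x, prod_mul_distrib,
    ← autCard_eq_prod_of_subset hsub, prod_ite_eq', if_pos (mem_insert_self _ _)]

section PartitionSum

variable {K : Type*} [Field K]

def partitionWeight (f : ℕ → K) (m : Multiset ℕ) : K :=
  (autCard m : K)⁻¹ * (m.map f).prod

/-- The coefficient of `x ^ n` in `exp (∑ j, f j * x ^ j)`. -/
def partitionSum (f : ℕ → K) (n : ℕ) : K :=
  ∑ μ : n.Partition, partitionWeight f μ.parts

lemma count_mul_partitionWeight_cons [CharZero K] (f : ℕ → K) (a : ℕ) (m : Multiset ℕ) :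
    ((a ::ₘ m).count a : K) * partitionWeight f (a ::ₘ m) = f a * partitionWeight f m := by
  have : (m.count a : K) + 1 ≠ 0 := Nat.cast_add_one_ne_zero _
  have : (autCard m : K) ≠ 0 :=
    Nat.cast_ne_zero.mpr (prod_ne_zero_iff.mpr fun _ _ => factorial_ne_zero _)
  simp only [partitionWeight, autCard_cons, Multiset.count_cons_self, Multiset.map_cons,
    Multiset.prod_cons, cast_mul]
  field_simp

lemma partitionSum_zero (f : ℕ → K) : partitionSum f 0 = 1 := by
  simp [partitionSum, partitionWeight, autCard]

lemma sum_count_mul_partitionWeight [CharZero K] (f : ℕ → K) {n j : ℕ} (hj : 1 ≤ j)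
    (hjn : j ≤ n) :
    ∑ μ : n.Partition, (μ.parts.count j : K) * partitionWeight f μ.parts =
      f j * partitionSum f (n - j) := by
  classical
  rw [← sum_filter_of_ne (p := fun μ : n.Partition => j ∈ μ.parts) fun μ _ h =>
      Multiset.count_ne_zero.mp (Nat.cast_ne_zero.mp (left_ne_zero_of_mul h)),
    sum_subtype _ (fun μ => mem_filter_univ (p := fun μ : n.Partition => j ∈ μ.parts) μ),
    ← (Nat.Partition.partitionWithPartEquiv hj hjn).symm.sum_comp, partitionSum, mul_sum]
  refine sum_congr rfl fun ν _ => ?_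
  rw [Nat.Partition.partitionWithPartEquiv_symm_apply_parts, count_mul_partitionWeight_cons]

lemma natCast_mul_partitionWeight {n : ℕ} (f : ℕ → K) (μ : n.Partition) :
    (n : K) * partitionWeight f μ.parts =
      ∑ j ∈ range (n + 1), j * ((μ.parts.count j : K) * partitionWeight f μ.parts) := by
  have hsum : (n : K) = ∑ j ∈ range (n + 1), (μ.parts.count j : K) * j := by
    conv_lhs => rw [← μ.parts_sum, sum_multiset_count_of_subset _ (range (n + 1)) fun j hj =>
      mem_range_succ_iff.mpr (μ.le_of_mem_parts (Multiset.mem_toFinset.mp hj))]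
    simp only [smul_eq_mul, cast_sum, cast_mul]
  rw [hsum, sum_mul]
  exact sum_congr rfl fun j _ => by ring

lemma natCast_mul_partitionSum [CharZero K] (f : ℕ → K) (n : ℕ) :
    (n : K) * partitionSum f n = ∑ j ∈ range (n + 1), j * f j * partitionSum f (n - j) := by
  rw [partitionSum, mul_sum, sum_congr rfl fun μ _ => natCast_mul_partitionWeight f μ, sum_comm]
  refine sum_congr rfl fun j hj => ?_
  rcases j.eq_zero_or_pos with rfl | hj0
  · simp
  · rw [← mul_sum, sum_count_mul_partitionWeight f hj0 (mem_range_succ_iff.mp hj), mul_assoc]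

lemma partitionSum_eq_of_rec [CharZero K] (f B : ℕ → K) (h0 : B 0 = 1)
    (hrec : ∀ n : ℕ, (n : K) * B n = ∑ j ∈ range (n + 1), j * f j * B (n - j)) (n : ℕ) :
    partitionSum f n = B n := by
  induction n using Nat.strong_induction_on with
  | _ n ih =>
    rcases n.eq_zero_or_pos with rfl | hn
    · rw [partitionSum_zero, h0]
    · refine mul_left_cancel₀ (Nat.cast_ne_zero.mpr hn.ne') ?_
      rw [natCast_mul_partitionSum, hrec]
      refine sum_congr rfl fun j hj => ?_
      rcases j.eq_zero_or_pos with rfl | hj0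
      · simp
      · rw [ih _ (by omega)]

end PartitionSum

lemma choose_mul_choose_sub_comm (m i j : ℕ) :
    m.choose j * (m - j).choose i = m.choose i * (m - i).choose j := by
  have hj := Nat.choose_mul (n := m) (k := i + j) (s := j) (by omega)
  have hi := Nat.choose_mul (n := m) (k := i + j) (s := i) (by omega)
  rw [Nat.add_sub_cancel] at hj
  rw [Nat.add_sub_cancel_left] at hi
  rw [← hj, ← hi, Nat.choose_symm_add]

section Abel

variable {R : Type*} [CommRing R]

lemma sum_range_choose_mul_of_le {k n : ℕ} (h : k ≤ n) (g : ℕ → R) :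
    ∑ j ∈ range (n + 1), (k.choose j : R) * g j = ∑ j ∈ range (k + 1), k.choose j * g j :=
  (sum_subset (range_subset_range.mpr (by omega)) fun j _ hj => by
    rw [choose_eq_zero_of_lt (by simpa using hj), cast_zero, zero_mul]).symm

lemma sum_neg_one_pow_mul_choose_mul_pow_eq_zero {d n : ℕ} (h : d < n) (x : R) :
    ∑ j ∈ range (n + 1), (-1) ^ (n - j) * n.choose j * (x + j) ^ d = 0 := by
  have := congrFun (fwdDiff_iter_pow_eq_zero_of_lt (R := R) h) x
  rw [fwdDiff_iter_eq_sum_shift] at this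
  simpa [zsmul_eq_mul] using this

/-- The Abel polynomial `x (x + n) ^ (n - 1)`, normalised to `1` at `n = 0` (where the formula,
read with `0 - 1 = 0` in `ℕ`, would give `x`). -/
def abelPoly (x : R) (n : ℕ) : R :=
  if n = 0 then 1 else x * (x + n) ^ (n - 1)

lemma sum_choose_mul_abelPoly_mul_neg_pow (x : R) (s : ℕ) :
    ∑ j ∈ range (s + 1), s.choose j * (abelPoly x j * (-(x + j)) ^ (s - j)) =
      if s = 0 then 1 else 0 := by
  rcases s with _ | t
  · simp [abelPoly]
  rw [if_neg t.succ_ne_zero, ← mul_zero x,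
    ← sum_neg_one_pow_mul_choose_mul_pow_eq_zero t.lt_succ_self x, mul_sum]
  refine sum_congr rfl fun j hj => ?_
  have hjt := mem_range_succ_iff.mp hj
  rw [neg_pow]
  rcases j.eq_zero_or_pos with rfl | hj0
  · simp only [abelPoly, if_pos, cast_zero, add_zero, Nat.sub_zero, pow_succ]
    ring
  · have hsplit : (x + j : R) ^ t = (x + j) ^ (j - 1) * (x + j) ^ (t + 1 - j) := by
      rw [← pow_add]; congr 1; omega
    rw [abelPoly, if_neg hj0.ne', hsplit]
    ring

theorem sum_choose_mul_abelPoly_mul_pow (x y : R) (m : ℕ) :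
    ∑ j ∈ range (m + 1), m.choose j * abelPoly x j * (y + (m - j : ℕ)) ^ (m - j) =
      (x + y + m) ^ m := by
  set z := x + y + m
  have hexp : ∀ j ∈ range (m + 1), (y + (m - j : ℕ)) ^ (m - j) =
      ∑ i ∈ range (m + 1), ((m - j).choose i : R) * (z ^ i * (-(x + j)) ^ (m - j - i)) := by
    intro j hj
    have : y + ((m - j : ℕ) : R) = z + -(x + j) := by
      rw [cast_sub (mem_range_succ_iff.mp hj)]
      ring
    rw [this, add_pow, sum_range_choose_mul_of_le (Nat.sub_le m j)]
    exact sum_congr rfl fun i _ => by ring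
  calc ∑ j ∈ range (m + 1), m.choose j * abelPoly x j * (y + (m - j : ℕ)) ^ (m - j)
      = ∑ i ∈ range (m + 1), m.choose i * z ^ i * ∑ j ∈ range (m + 1),
          ((m - i).choose j : R) * (abelPoly x j * (-(x + j)) ^ (m - i - j)) := by
        rw [sum_congr rfl fun j hj => by rw [hexp j hj, mul_sum], sum_comm]
        refine sum_congr rfl fun i _ => ?_
        rw [mul_sum]
        refine sum_congr rfl fun j _ => ?_
        have := congrArg (Nat.cast (R := R)) (choose_mul_choose_sub_comm m i j)
        push_cast at this
        rw [show m - j - i = m - i - j by omega]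
        linear_combination (abelPoly x j * z ^ i * (-(x + j)) ^ (m - i - j)) * this
    _ = ∑ i ∈ range (m + 1), m.choose i * z ^ i * if m - i = 0 then 1 else 0 := by
        refine sum_congr rfl fun i _ => ?_
        rw [sum_range_choose_mul_of_le (Nat.sub_le m i), sum_choose_mul_abelPoly_mul_neg_pow]
    _ = z ^ m := by
        rw [sum_range_succ, sum_eq_zero fun i hi => by
          rw [if_neg (by simp at hi; omega), mul_zero]]
        simp

end Abel

/-- `exp (a T(x)) = ∑ₙ abelPoly a n xⁿ / n!` for the tree function `T(x) = ∑ j^(j-1) xʲ / j!`. -/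
theorem partitionSum_eq_abelPoly_div_factorial {K : Type*} [Field K] [CharZero K] (a : K)
    (n : ℕ) : partitionSum (fun j : ℕ => a * j ^ (j - 1) / j !) n = abelPoly a n / n ! := by
  refine partitionSum_eq_of_rec _ (fun n => abelPoly a n / n !) (by simp [abelPoly])
    (fun n => ?_) n
  rcases n with _ | m
  · simp
  have hterm : ∀ i ∈ range (m + 1),
      ((m + 1 - i : ℕ) : K) * (a * ((m + 1 - i : ℕ) : K) ^ (m + 1 - i - 1) / (m + 1 - i)!) *
          (abelPoly a (m + 1 - (m + 1 - i)) / (m + 1 - (m + 1 - i))!) =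
        a / m ! * (m.choose i * abelPoly a i * (1 + (m - i : ℕ)) ^ (m - i)) := by
    intro i hi
    obtain ⟨d, rfl⟩ := Nat.exists_eq_add_of_le (mem_range_succ_iff.mp hi)
    have hfac : ((i + d).choose i : K) * i ! * d ! = (i + d)! := by
      rw [Nat.choose_symm_add]
      exact_mod_cast Nat.add_choose_mul_factorial_mul_factorial i d
    have hc : ((i + d).choose i : K) ≠ 0 := Nat.cast_ne_zero.mpr (Nat.choose_pos (by omega)).ne'
    simp only [show i + d + 1 - i = d + 1 by omega, show i + d - i = d by omega,
      show i + d + 1 - (d + 1) = i by omega, Nat.add_sub_cancel, factorial_succ]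
    rw [← hfac]
    push_cast
    field_simp
    ring
  -- after reindexing by `i = m + 1 - j`, the recurrence is Abel's identity at `x = a`, `y = 1`
  rw [← sum_range_reflect, sum_range_succ, Nat.add_sub_cancel, Nat.sub_self, cast_zero, zero_mul,
    zero_mul, add_zero, sum_congr rfl hterm, ← mul_sum, sum_choose_mul_abelPoly_mul_pow, abelPoly,
    if_neg m.succ_ne_zero, factorial_succ]
  push_cast
  field_simp
  ring

lemma sum_Icc_neg_one_pow_mul_choose {R : Type*} [CommRing R] {n : ℕ} (hn : n ≠ 0) :
    ∑ p ∈ Icc 1 n, (-1 : R) ^ p * n.choose p = -1 := by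
  have h := add_pow (-1 : R) 1 n
  rw [neg_add_cancel, zero_pow hn, range_eq_Ico, sum_eq_sum_Ico_succ_bot (by omega)] at h
  simp only [one_pow, mul_one, pow_zero, choose_zero_right, cast_one, zero_add,
    Ico_add_one_right_eq_Icc] at h
  linear_combination -h

section Localization

variable {K : Type*} [Field K] [CharZero K]

lemma sum_partition_eq_abelPoly {c : K} (hc : c ≠ 0) (q₁ q₂ : K) (n : ℕ) :
    ∑ μ : n.Partition, (autCard μ.parts : K)⁻¹ * q₁ *
        ((μ.parts.map fun b : ℕ => (-(b : K))⁻¹).prod) *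
        (q₂ * (μ.parts.map fun b : ℕ => (b : K) ^ b / (b ! : K)).prod) *
        c ^ (((1 + μ.parts.card : ℕ) : ℤ) - 3) =
      q₁ * q₂ / c ^ 2 * (abelPoly (-c) n / n !) := by
  rw [← partitionSum_eq_abelPoly_div_factorial, partitionSum, mul_sum]
  refine sum_congr rfl fun μ _ => ?_
  have hpow : c ^ (((1 + μ.parts.card : ℕ) : ℤ) - 3) = c ^ μ.parts.card / c ^ 2 := by
    rw [show ((1 + μ.parts.card : ℕ) : ℤ) - 3 = (μ.parts.card : ℤ) - (2 : ℕ) by push_cast; ring,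
      zpow_sub₀ hc, zpow_natCast, zpow_natCast]
  have hprod : (μ.parts.map fun b : ℕ => (-(b : K))⁻¹).prod *
      (μ.parts.map fun b : ℕ => (b : K) ^ b / (b ! : K)).prod * c ^ μ.parts.card =
      (μ.parts.map fun j : ℕ => -c * j ^ (j - 1) / j !).prod := by
    rw [← Multiset.prod_replicate, ← Multiset.map_const', ← Multiset.prod_map_mul,
      ← Multiset.prod_map_mul]
    refine congrArg _ (Multiset.map_congr rfl fun b hmem => ?_)
    have hb : (b : K) ≠ 0 := Nat.cast_ne_zero.mpr (μ.parts_pos hmem).ne'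
    rw [← Nat.sub_add_cancel (μ.parts_pos hmem), pow_succ, Nat.add_sub_cancel]
    field_simp
  rw [hpow, partitionWeight, ← hprod]
  ring

lemma localization_summand_eq {α p : ℕ} (hp : 1 ≤ p) (hpα : p ≤ 1 + α) :
    (p : K) ^ (-(α : ℤ)) * ((p : K) ^ p / p !) / ((1 + α : ℕ) : K) ^ 2 *
        (abelPoly (-((1 + α : ℕ) : K)) (1 + α - p) / (1 + α - p)!) =
      (-1) ^ α / (((1 + α : ℕ) : K) * (1 + α)!) * -((-1) ^ p * (1 + α).choose p) := by
  have hk : ((1 + α : ℕ) : K) ≠ 0 := Nat.cast_ne_zero.mpr (by omega)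
  have hc : ((1 + α).choose p : K) ≠ 0 := Nat.cast_ne_zero.mpr (Nat.choose_pos hpα).ne'
  have hp0 : (p : K) ≠ 0 := Nat.cast_ne_zero.mpr (by omega)
  have hfac : ((1 + α).choose p : K) * p ! * (1 + α - p)! = (1 + α)! := by
    exact_mod_cast Nat.choose_mul_factorial_mul_factorial hpα
  rw [zpow_neg, zpow_natCast]
  rcases hpα.lt_or_eq with hlt | rfl
  · rw [← hfac]
    obtain ⟨d, rfl⟩ := Nat.exists_eq_add_of_le (show p ≤ α by omega)
    rw [show 1 + (p + d) - p = d + 1 by omega, abelPoly, if_neg d.succ_ne_zero, Nat.add_sub_cancel,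
      show -((1 + (p + d) : ℕ) : K) + ((d + 1 : ℕ) : K) = -p by push_cast; ring, neg_pow, pow_add]
    have : (p ! : K) ≠ 0 := Nat.cast_ne_zero.mpr p.factorial_ne_zero
    have : ((d + 1)! : K) ≠ 0 := Nat.cast_ne_zero.mpr (d + 1).factorial_ne_zero
    field_simp
    linear_combination (-1 : K) ^ d * ((even_two_mul p).neg_one_pow : (-1 : K) ^ (2 * p) = 1)
  · have : ((1 + α)! : K) ≠ 0 := Nat.cast_ne_zero.mpr (1 + α).factorial_ne_zero
    rw [Nat.sub_self, abelPoly, if_pos rfl, choose_self, pow_add]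
    field_simp
    linear_combination -((even_two_mul α).neg_one_pow : (-1 : K) ^ (2 * α) = 1)

end Localization

/-- The localization identity `J_k = 1/(k·k!)`: for `k = 1 + α₁`, the sum over all
tuples `(p₁; {p₂,…,p_ℓ})` — `p₁ ≥ 1` distinguished and `{p₂,…,p_ℓ}` an unordered
multiset of positive integers (i.e. a partition of `k - p₁`, possibly empty) — of
`(1/|Aut({p₂,…,p_ℓ})|) · p₁^{-α₁} · ∏_{i≥2} (-p_i)⁻¹ · ∏_i (p_i^{p_i}/p_i!) · k^{ℓ-3}`
equals `(-1)^{α₁} / (k·k!)`. -/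
theorem stmt_19 (α₁ : ℕ) :
    ∑ p₁ ∈ Finset.Icc 1 (1 + α₁), ∑ μ : Nat.Partition (1 + α₁ - p₁),
        (autCard μ.parts : ℚ)⁻¹ * (p₁ : ℚ) ^ (-(α₁ : ℤ)) *
          ((μ.parts.map fun b : ℕ => (-(b : ℚ))⁻¹).prod) *
          ((p₁ : ℚ) ^ p₁ / (Nat.factorial p₁ : ℚ) *
            (μ.parts.map fun b : ℕ => (b : ℚ) ^ b / (Nat.factorial b : ℚ)).prod) *
          ((1 + α₁ : ℕ) : ℚ) ^ (((1 + μ.parts.card : ℕ) : ℤ) - 3) =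
      (-1 : ℚ) ^ α₁ / (((1 + α₁ : ℕ) : ℚ) * (Nat.factorial (1 + α₁) : ℚ)) := by
  have hk : ((1 + α₁ : ℕ) : ℚ) ≠ 0 := Nat.cast_ne_zero.mpr (by omega)
  rw [sum_congr rfl fun p _ => sum_partition_eq_abelPoly hk _ _ _,
    sum_congr rfl fun p hp => localization_summand_eq (mem_Icc.mp hp).1 (mem_Icc.mp hp).2,
    ← mul_sum, sum_neg_distrib, sum_Icc_neg_one_pow_mul_choose (by omega)]
  ring
end
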